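/- arXiv:1206.1208 — 4 statements merged into one kernel-verified Lean document; each statement's English description precedes it below -/
import Mathlib

section
/- For all λ ≥ 2, E[N_{1:λ+1}²] > E[N_{1:λ}²], where N_{1:λ} is the minimum of λ i.i.d. standard normal random variables. In particular, E[N_{1:λ}²] > 1 for all λ ≥ 3. -/
/-!
Let `p(t) = P(ξ > √t)`. By the layer-cake formula `E[N²] = ∫₀^∞ P(N² > t) dt`, and by
independence and the symmetry of `ξ`, `P(N_{1:n}² > t) = pⁿ + 1 - (1 - p)ⁿ`. Its increment from
`n` to `n + 1` is `p (1 - p) ((1 - p)ⁿ⁻¹ - pⁿ⁻¹)`, which vanishes for `n = 1` and is positive for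
`n ≥ 2` because `0 < p < 1/2` when `t > 0`. Hence `E[N_{1:2}²] = E[ξ²] = 1`, and the second
moments increase strictly from `n = 2` on.
-/

open MeasureTheory ProbabilityTheory Filter

noncomputable def stdPi (n : ℕ) : Measure (Fin n → ℝ) :=
  Measure.pi fun _ => gaussianReal 0 1

/-- The `i`-th order statistic (0-indexed): the `i`-th smallest coordinate. -/
noncomputable def orderStat (n i : ℕ) (ω : Fin n → ℝ) : ℝ :=
  ((List.ofFn ω).insertionSort (· ≤ ·)).getD i 0

open Set
open scoped NNReal ENNReal

section OrderStat

variable {n : ℕ}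

lemma isLeast_orderStat_zero (hn : n ≠ 0) (ω : Fin n → ℝ) :
    IsLeast (range ω) (orderStat n 0 ω) := by
  have hperm := List.perm_insertionSort (· ≤ ·) (List.ofFn ω)
  have hsorted := List.pairwise_insertionSort (· ≤ ·) (List.ofFn ω)
  rcases h : (List.ofFn ω).insertionSort (· ≤ ·) with _ | ⟨a, l⟩
  · exact absurd (by simpa [h, eq_comm] using hperm.length_eq) hn
  rw [h] at hperm hsorted
  have ha : orderStat n 0 ω = a := by simp [orderStat, h]
  have hmem : ∀ x, x ∈ a :: l ↔ x ∈ range ω := fun x => hperm.mem_iff.trans List.mem_ofFn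
  rw [ha]
  refine ⟨(hmem a).1 List.mem_cons_self, ?_⟩
  rintro x hx
  rcases List.mem_cons.1 ((hmem x).2 hx) with rfl | hxl
  · exact le_rfl
  · exact List.rel_of_pairwise_cons hsorted hxl

lemma orderStat_one_zero (ω : Fin 1 → ℝ) : orderStat 1 0 ω = ω 0 := by
  simp [orderStat, List.ofFn_succ]

lemma setOf_lt_orderStat_zero (hn : n ≠ 0) (s : ℝ) :
    {ω | s < orderStat n 0 ω} = univ.pi fun _ => Ioi s := by
  ext ω
  simp [(isLeast_orderStat_zero hn ω).lt_iff]

lemma setOf_le_orderStat_zero (hn : n ≠ 0) (s : ℝ) :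
    {ω | s ≤ orderStat n 0 ω} = univ.pi fun _ => Ici s := by
  ext ω
  simp [le_isGLB_iff (isLeast_orderStat_zero hn ω).isGLB, mem_lowerBounds, Pi.le_def]

lemma measurable_orderStat_zero (hn : n ≠ 0) : Measurable (orderStat n 0) :=
  measurable_of_Ioi fun s => by
    change MeasurableSet {ω | s < orderStat n 0 ω}
    rw [setOf_lt_orderStat_zero hn s]
    exact MeasurableSet.univ_pi fun _ => measurableSet_Ioi

lemma orderStat_zero_sq_le_sum (hn : n ≠ 0) (ω : Fin n → ℝ) :
    orderStat n 0 ω ^ 2 ≤ ∑ i, ω i ^ 2 := by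
  obtain ⟨i, hi⟩ := (isLeast_orderStat_zero hn ω).1
  rw [← hi]
  exact Finset.single_le_sum (fun j _ => sq_nonneg (ω j)) (Finset.mem_univ i)

end OrderStat

lemma measureReal_setOf_lt_sq {Ω : Type*} [MeasurableSpace Ω] (μ : Measure Ω)
    [IsFiniteMeasure μ] {X : Ω → ℝ} (hX : Measurable X) {t : ℝ} (ht : 0 ≤ t) :
    μ.real {ω | t < X ω ^ 2} = μ.real {ω | √t < X ω} + μ.real {ω | X ω < -√t} := by
  have hsplit : {ω | t < X ω ^ 2} = {ω | √t < X ω} ∪ {ω | X ω < -√t} := by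
    ext ω
    simp only [mem_ofPred_eq, mem_union]
    rw [← Real.sqrt_lt_sqrt_iff ht, Real.sqrt_sq_eq_abs, lt_abs, lt_neg]
  have hdisj : Disjoint {ω | √t < X ω} {ω | X ω < -√t} :=
    disjoint_left.2 fun ω h₁ h₂ => by
      simp only [mem_ofPred_eq] at h₁ h₂
      linarith [Real.sqrt_nonneg t]
  rw [hsplit, measureReal_union hdisj (measurableSet_lt hX measurable_const)]

lemma measureReal_pi_univ_pi {ι α : Type*} [Fintype ι] [MeasurableSpace α] (μ : Measure α)
    [SigmaFinite μ] (s : Set α) :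
    (Measure.pi fun _ : ι => μ).real (univ.pi fun _ => s) = μ.real s ^ Fintype.card ι := by
  simp [Measure.real, Measure.pi_pi]

section Gaussian

variable {v : ℝ≥0}

lemma gaussianReal_zero_preimage_neg (s : Set ℝ) (hs : MeasurableSet s) :
    gaussianReal 0 v (Neg.neg ⁻¹' s) = gaussianReal 0 v s := by
  rw [← Measure.map_apply measurable_neg hs]
  simpa using congrArg (· s) (gaussianReal_map_neg (μ := 0) (v := v))

lemma gaussianReal_real_Ici_neg (x : ℝ) :
    (gaussianReal 0 v).real (Ici (-x)) = 1 - (gaussianReal 0 v).real (Ioi x) := by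
  have hIci : Ici (-x) = Neg.neg ⁻¹' Iic x := by ext; simp
  rw [hIci, Measure.real, gaussianReal_zero_preimage_neg _ measurableSet_Iic, ← Measure.real,
    ← compl_Ioi, probReal_compl_eq_one_sub measurableSet_Ioi]

lemma integral_sq_gaussianReal_zero : ∫ x, x ^ 2 ∂gaussianReal 0 v = v :=
  (variance_of_integral_eq_zero aemeasurable_id' integral_id_gaussianReal).symm.trans
    variance_fun_id_gaussianReal

lemma measureReal_gaussianReal_pos {μ : ℝ} (hv : v ≠ 0) {s : Set ℝ} (hs : volume s ≠ 0) :
    0 < (gaussianReal μ v).real s :=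
  ENNReal.toReal_pos (mt (gaussianReal_absolutelyContinuous' μ hv ·) hs) (measure_ne_top _ _)

lemma gaussianReal_real_Ioi_lt_half (hv : v ≠ 0) {x : ℝ} (hx : 0 < x) :
    (gaussianReal 0 v).real (Ioi x) < 1 / 2 := by
  have hcentre : 0 < (gaussianReal 0 v).real (Ioo (-x) x) :=
    measureReal_gaussianReal_pos hv (by simp; linarith)
  have hdisj : Disjoint (Ioo (-x) x) (Ioi x) :=
    disjoint_left.2 fun y h₁ h₂ => h₁.2.not_gt h₂
  have hsub : Ioo (-x) x ∪ Ioi x ⊆ Ici (-x) :=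
    union_subset (fun y hy => le_of_lt hy.1) (Ioi_subset_Ici (by linarith))
  have := measureReal_mono (μ := gaussianReal 0 v) hsub
  rw [measureReal_union hdisj measurableSet_Ioi, gaussianReal_real_Ici_neg] at this
  linarith

end Gaussian

/-- `P(N² > t)` for the minimum `N` of `n` i.i.d. symmetric variables, where `p = P(ξ > √t)`. -/
def sqMinTail (n : ℕ) (p : ℝ) : ℝ := p ^ n + (1 - (1 - p) ^ n)

lemma sqMinTail_two (p : ℝ) : sqMinTail 2 p = sqMinTail 1 p := by
  unfold sqMinTail; ring

lemma sqMinTail_nonneg {p : ℝ} (hp₀ : 0 ≤ p) (hp₁ : p ≤ 1) (n : ℕ) : 0 ≤ sqMinTail n p :=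
  add_nonneg (pow_nonneg hp₀ n) (sub_nonneg.2 (pow_le_one₀ (by linarith) (by linarith)))

lemma sqMinTail_lt_succ {p : ℝ} (hp₀ : 0 < p) (hp : p < 1 / 2) {n : ℕ} (hn : 2 ≤ n) :
    sqMinTail n p < sqMinTail (n + 1) p := by
  obtain ⟨m, rfl⟩ : ∃ m, n = m + 2 := ⟨n - 2, by omega⟩
  have hpow : p ^ (m + 1) < (1 - p) ^ (m + 1) :=
    pow_lt_pow_left₀ (by linarith) hp₀.le m.succ_ne_zero
  have hdiff : sqMinTail (m + 3) p - sqMinTail (m + 2) p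
      = p * (1 - p) * ((1 - p) ^ (m + 1) - p ^ (m + 1)) := by
    unfold sqMinTail; ring
  have : 0 < p * (1 - p) * ((1 - p) ^ (m + 1) - p ^ (m + 1)) :=
    mul_pos (mul_pos hp₀ (by linarith)) (sub_pos.2 hpow)
  linarith

lemma measurable_sqMinTail_comp {f : ℝ → ℝ} (hf : Measurable f) (n : ℕ) :
    Measurable fun t => sqMinTail n (f t) := by
  unfold sqMinTail; fun_prop

section StdPi

variable {n : ℕ}

instance : IsProbabilityMeasure (stdPi n) := by
  unfold stdPi; infer_instance

lemma measurePreserving_eval_stdPi (i : Fin n) :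
    MeasurePreserving (Function.eval i) (stdPi n) (gaussianReal 0 1) :=
  measurePreserving_eval _ i

lemma stdPi_real_setOf_lt_orderStat_zero_sq (hn : n ≠ 0) {t : ℝ} (ht : 0 ≤ t) :
    (stdPi n).real {ω | t < orderStat n 0 ω ^ 2}
      = sqMinTail n ((gaussianReal 0 1).real (Ioi √t)) := by
  have hle : MeasurableSet {ω | -√t ≤ orderStat n 0 ω} :=
    measurableSet_le measurable_const (measurable_orderStat_zero hn)
  have hlt : {ω | orderStat n 0 ω < -√t} = {ω | -√t ≤ orderStat n 0 ω}ᶜ := by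
    ext; simp
  rw [measureReal_setOf_lt_sq _ (measurable_orderStat_zero hn) ht, hlt,
    probReal_compl_eq_one_sub hle, setOf_lt_orderStat_zero hn, setOf_le_orderStat_zero hn,
    stdPi, measureReal_pi_univ_pi, measureReal_pi_univ_pi, gaussianReal_real_Ici_neg,
    Fintype.card_fin, sqMinTail]

lemma lintegral_orderStat_zero_sq (hn : n ≠ 0) :
    ∫⁻ ω, ENNReal.ofReal (orderStat n 0 ω ^ 2) ∂stdPi n
      = ∫⁻ t in Ioi 0, ENNReal.ofReal (sqMinTail n ((gaussianReal 0 1).real (Ioi √t))) := by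
  rw [lintegral_eq_lintegral_meas_lt _ (ae_of_all _ fun _ => sq_nonneg _)
    ((measurable_orderStat_zero hn).pow_const 2).aemeasurable]
  refine setLIntegral_congr_fun measurableSet_Ioi fun t ht => ?_
  rw [← stdPi_real_setOf_lt_orderStat_zero_sq hn (le_of_lt ht), ofReal_measureReal]

lemma integrable_orderStat_zero_sq (hn : n ≠ 0) :
    Integrable (fun ω => orderStat n 0 ω ^ 2) (stdPi n) := by
  have hcoord (i : Fin n) : Integrable (fun ω : Fin n → ℝ => ω i ^ 2) (stdPi n) :=
    ((memLp_id_gaussianReal 2).comp_measurePreserving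
      (measurePreserving_eval_stdPi i)).integrable_sq
  refine (integrable_finsetSum Finset.univ fun i _ => hcoord i).mono'
    ((measurable_orderStat_zero hn).pow_const 2).aestronglyMeasurable (ae_of_all _ fun ω => ?_)
  rw [Real.norm_of_nonneg (sq_nonneg _)]
  exact orderStat_zero_sq_le_sum hn ω

lemma lintegral_orderStat_zero_sq_ne_top (hn : n ≠ 0) :
    ∫⁻ ω, ENNReal.ofReal (orderStat n 0 ω ^ 2) ∂stdPi n ≠ ∞ :=
  (hasFiniteIntegral_iff_ofReal (ae_of_all _ fun _ => sq_nonneg _)).1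
    (integrable_orderStat_zero_sq hn).2 |>.ne

lemma integral_orderStat_zero_sq (hn : n ≠ 0) :
    ∫ ω, orderStat n 0 ω ^ 2 ∂stdPi n
      = (∫⁻ ω, ENNReal.ofReal (orderStat n 0 ω ^ 2) ∂stdPi n).toReal :=
  integral_eq_lintegral_of_nonneg_ae (ae_of_all _ fun _ => sq_nonneg _)
    (integrable_orderStat_zero_sq hn).1

lemma lintegral_orderStat_zero_sq_lt_succ (hn : 2 ≤ n) :
    ∫⁻ ω, ENNReal.ofReal (orderStat n 0 ω ^ 2) ∂stdPi n
      < ∫⁻ ω, ENNReal.ofReal (orderStat (n + 1) 0 ω ^ 2) ∂stdPi (n + 1) := by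
  have hn₀ : n ≠ 0 := by omega
  have hfin := lintegral_orderStat_zero_sq_ne_top hn₀
  rw [lintegral_orderStat_zero_sq hn₀] at hfin ⊢
  rw [lintegral_orderStat_zero_sq n.succ_ne_zero]
  have htail : Measurable fun t : ℝ => (gaussianReal 0 1).real (Ioi √t) :=
    Antitone.measurable fun s t hst =>
      measureReal_mono (Ioi_subset_Ioi (Real.sqrt_le_sqrt hst))
  refine lintegral_strict_mono (by simp)
    (measurable_sqMinTail_comp htail _).ennreal_ofReal.aemeasurable hfin ?_
  refine (ae_restrict_iff' measurableSet_Ioi).2 (ae_of_all _ fun t ht => ?_)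
  have hp₀ : 0 < (gaussianReal 0 1).real (Ioi √t) :=
    measureReal_gaussianReal_pos one_ne_zero (by simp)
  have hp := gaussianReal_real_Ioi_lt_half one_ne_zero (Real.sqrt_pos.2 ht)
  rw [ENNReal.ofReal_lt_ofReal_iff_of_nonneg (sqMinTail_nonneg hp₀.le (by linarith) n)]
  exact sqMinTail_lt_succ hp₀ hp hn

lemma integral_orderStat_zero_sq_lt_succ (hn : 2 ≤ n) :
    ∫ ω, orderStat n 0 ω ^ 2 ∂stdPi n < ∫ ω, orderStat (n + 1) 0 ω ^ 2 ∂stdPi (n + 1) := by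
  rw [integral_orderStat_zero_sq (by omega), integral_orderStat_zero_sq n.succ_ne_zero]
  exact (ENNReal.toReal_lt_toReal (lintegral_orderStat_zero_sq_ne_top (by omega))
    (lintegral_orderStat_zero_sq_ne_top n.succ_ne_zero)).2
      (lintegral_orderStat_zero_sq_lt_succ hn)

lemma integral_orderStat_one_zero_sq : ∫ ω, orderStat 1 0 ω ^ 2 ∂stdPi 1 = 1 :=
  calc ∫ ω, orderStat 1 0 ω ^ 2 ∂stdPi 1
      = ∫ x, x ^ 2 ∂(stdPi 1).map (Function.eval 0) := by
        simp_rw [orderStat_one_zero]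
        exact (integral_map (μ := stdPi 1) (measurable_pi_apply 0).aemeasurable
          (continuous_pow 2).aestronglyMeasurable).symm
    _ = 1 := by
        rw [(measurePreserving_eval_stdPi 0).map_eq, integral_sq_gaussianReal_zero,
          NNReal.coe_one]

lemma integral_orderStat_two_zero_sq : ∫ ω, orderStat 2 0 ω ^ 2 ∂stdPi 2 = 1 := by
  rw [integral_orderStat_zero_sq two_ne_zero, lintegral_orderStat_zero_sq two_ne_zero]
  simp_rw [sqMinTail_two]
  rw [← lintegral_orderStat_zero_sq one_ne_zero, ← integral_orderStat_zero_sq one_ne_zero,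
    integral_orderStat_one_zero_sq]

end StdPi

theorem stmt_2 :
    (∀ lam : ℕ, 2 ≤ lam →
      (∫ ω, (orderStat lam 0 ω) ^ 2 ∂(stdPi lam))
        < ∫ ω, (orderStat (lam + 1) 0 ω) ^ 2 ∂(stdPi (lam + 1))) ∧
    (∀ lam : ℕ, 3 ≤ lam → 1 < ∫ ω, (orderStat lam 0 ω) ^ 2 ∂(stdPi lam)) := by
  refine ⟨fun lam hlam => integral_orderStat_zero_sq_lt_succ hlam, fun lam hlam => ?_⟩
  induction lam, hlam using Nat.le_induction with
  | base =>
    simpa [integral_orderStat_two_zero_sq] using integral_orderStat_zero_sq_lt_succ le_rfl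
  | succ n hn ih => exact ih.trans (integral_orderStat_zero_sq_lt_succ (by omega))
end

section
/- For λ ≥ 2, E[N_{1:λ}²] ≥ E[N_{2:λ}²], where N_{1:λ} and N_{2:λ} are the first and second order statistics of λ i.i.d. standard normal random variables. -/
/-!
By the layer-cake formula it suffices to show `P(|N₂| > a) ≤ P(|N₁| > a)` for every `a ≥ 0`.
Let `A` be the number of coordinates `≤ a` and `B ≤ A` the number of coordinates `< -a`.
Then `|N₂| > a` means `A ≤ 1 ∨ B ≥ 2` and `|N₁| > a` means `A = 0 ∨ B ≥ 1`, so the two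
events differ only by `{A = 1}` against `{B = 1}`. With `p = P(X ≤ a)` and `q = P(X > a)`,
symmetry of the law gives `P(A = 1) = λ p q^(λ-1)` and `P(B = 1) = λ q p^(λ-1)`, and `q ≤ p`
concludes.
-/

open MeasureTheory ProbabilityTheory Filter

open Set

theorem List.Pairwise.apply_getElem_iff_lt_countP {α : Type*} [LE α] {l : List α}
    (hl : l.Pairwise (· ≤ ·)) {p : α → Bool} (hp : ∀ x y, x ≤ y → p y → p x)
    {k : ℕ} (hk : k < l.length) : p l[k] ↔ k < l.countP p := by
  induction l generalizing k with
  | nil => simp at hk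
  | cons x t ih =>
    obtain ⟨hx_le, ht⟩ := List.pairwise_cons.mp hl
    by_cases hx : p x
    · rcases k with _ | k
      · simp [hx]
      · simpa [List.countP_cons, hx] using ih ht (by simpa using hk)
    · have hnone : ∀ y ∈ x :: t, p y = false := by
        rintro y (_ | ⟨_, hy⟩)
        · simpa using hx
        · simpa using mt (hp x y (hx_le y hy)) hx
      have hzero : (x :: t).countP p = 0 :=
        List.countP_eq_zero.mpr fun y hy => by simp [hnone y hy]
      simp [hnone _ (List.getElem_mem hk), hzero]

section CoordCount

variable {ι α : Type*} [Fintype ι]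

open Classical in
noncomputable def coordCount (s : Set α) (ω : ι → α) : ℕ :=
  (Finset.univ.filter fun i => ω i ∈ s).card

theorem coordCount_mono {s t : Set α} (hst : s ⊆ t) (ω : ι → α) :
    coordCount s ω ≤ coordCount t ω := by
  classical
  unfold coordCount
  exact Finset.card_le_card (Finset.monotone_filter_right _ fun i _ => @hst (ω i))

theorem measurable_coordCount [MeasurableSpace α] {s : Set α} (hs : MeasurableSet s) :
    Measurable (coordCount (ι := ι) s) := by
  classical
  unfold coordCount
  simp_rw [Finset.card_filter]
  exact Finset.measurable_sum _ fun i _ =>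
    Measurable.ite (measurable_pi_apply i hs) measurable_const measurable_const

theorem setOf_coordCount_eq_one [DecidableEq ι] (s : Set α) :
    {ω : ι → α | coordCount s ω = 1} = ⋃ j, univ.pi fun i => if i = j then s else sᶜ := by
  classical
  ext ω
  simp only [coordCount, mem_ofPred_eq, Finset.card_eq_one, Finset.eq_singleton_iff_unique_mem,
    Finset.mem_filter, Finset.mem_univ, true_and, mem_iUnion, mem_univ_pi]
  refine exists_congr fun j => ⟨fun ⟨hj, huniq⟩ i => ?_, fun h => ⟨?_, fun i hi => ?_⟩⟩
  · split_ifs with hij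
    · exact hij ▸ hj
    · exact fun hi => hij (huniq i hi)
  · simpa using h j
  · by_contra hij
    simpa [hij, hi] using h i

theorem measure_pi_coordCount_eq_one [MeasurableSpace α] (μ : Measure α) [SigmaFinite μ]
    {s : Set α} (hs : MeasurableSet s) :
    Measure.pi (fun _ : ι => μ) {ω | coordCount s ω = 1}
      = Fintype.card ι * (μ s * μ sᶜ ^ (Fintype.card ι - 1)) := by
  classical
  have hpi (j : ι) : Measure.pi (fun _ : ι => μ) (univ.pi fun i => if i = j then s else sᶜ)
      = μ s * μ sᶜ ^ (Fintype.card ι - 1) := by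
    rw [Measure.pi_pi, ← Finset.mul_prod_erase _ _ (Finset.mem_univ j), if_pos rfl,
      Finset.prod_congr rfl fun i hi => by rw [if_neg (Finset.ne_of_mem_erase hi)],
      Finset.prod_const, Finset.card_erase_of_mem (Finset.mem_univ j), Finset.card_univ]
  rw [setOf_coordCount_eq_one, measure_iUnion, tsum_fintype]
  · simp [hpi]
  · intro j k hjk
    refine Set.disjoint_left.mpr fun ω hj hk => ?_
    have hjs : ω j ∈ s := by simpa using mem_univ_pi.mp hj j
    have hjs' : ω j ∉ s := by simpa [hjk] using mem_univ_pi.mp hk j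
    exact hjs' hjs
  · intro j
    exact MeasurableSet.univ_pi fun i => by split_ifs <;> simp [hs]

end CoordCount

section OrderStat

variable {n k : ℕ}

theorem orderStat_eq_getElem (hk : k < n) (ω : Fin n → ℝ) :
    orderStat n k ω = ((List.ofFn ω).insertionSort (· ≤ ·))[k]'(by simpa using hk) := by
  rw [orderStat, List.getD_eq_getElem]

theorem exists_orderStat_eq (hk : k < n) (ω : Fin n → ℝ) : ∃ i, orderStat n k ω = ω i := by
  have hmem : orderStat n k ω ∈ List.ofFn ω := by
    rw [orderStat_eq_getElem hk]
    exact (List.perm_insertionSort _ _).subset (List.getElem_mem _)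
  exact (List.mem_ofFn.mp hmem).imp fun _ h => h.symm

theorem orderStat_mem_iff (hk : k < n) (ω : Fin n → ℝ) {s : Set ℝ} (hs : IsLowerSet s) :
    orderStat n k ω ∈ s ↔ k < coordCount s ω := by
  classical
  have hsorted := List.pairwise_insertionSort (· ≤ ·) (List.ofFn ω)
  have key := hsorted.apply_getElem_iff_lt_countP (p := fun x => decide (x ∈ s))
    (fun x y hxy hy => by simpa using hs hxy (by simpa using hy)) (by simpa using hk)
  rw [orderStat_eq_getElem hk, ← decide_eq_true_iff (p := _ ∈ s), key,
    (List.perm_insertionSort _ _).countP_eq, List.ofFn_eq_map, List.countP_map, coordCount,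
    List.countP_eq_length_filter, Fin.univ_def]
  rfl

theorem lt_orderStat_iff (hk : k < n) (ω : Fin n → ℝ) (a : ℝ) :
    a < orderStat n k ω ↔ coordCount (Iic a) ω ≤ k := by
  rw [← not_le, ← mem_Iic, orderStat_mem_iff hk ω (isLowerSet_Iic a), not_lt]

theorem orderStat_lt_iff (hk : k < n) (ω : Fin n → ℝ) (b : ℝ) :
    orderStat n k ω < b ↔ k < coordCount (Iio b) ω :=
  orderStat_mem_iff hk ω (isLowerSet_Iio b)

theorem measurable_orderStat (hk : k < n) : Measurable (orderStat n k) := by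
  refine measurable_of_Ioi fun a => ?_
  have : orderStat n k ⁻¹' Ioi a = coordCount (Iic a) ⁻¹' Iic k := by
    ext ω
    exact lt_orderStat_iff hk ω a
  rw [this]
  exact measurable_coordCount measurableSet_Iic measurableSet_Iic

end OrderStat

theorem mul_pow_succ_le_mul_pow_succ {R : Type*} [CommSemiring R] [PartialOrder R]
    [IsOrderedRing R] {a b : R} (hb : 0 ≤ b) (hba : b ≤ a) (k : ℕ) :
    a * b ^ (k + 1) ≤ b * a ^ (k + 1) :=
  calc a * b ^ (k + 1) = a * b * b ^ k := by ring
    _ ≤ a * b * a ^ k := by gcongr; exact mul_nonneg (hb.trans hba) hb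
    _ = b * a ^ (k + 1) := by ring

section Symmetric

variable {μ : Measure ℝ} [μ.IsNegInvariant]

theorem measure_Iio_neg (a : ℝ) : μ (Iio (-a)) = μ (Ioi a) := by
  rw [← Measure.measure_neg, neg_Iio, neg_neg]

theorem measure_Ici_neg (a : ℝ) : μ (Ici (-a)) = μ (Iic a) := by
  rw [← Measure.measure_neg, neg_Ici, neg_neg]

theorem measure_Ioi_le_measure_Iic {a : ℝ} (ha : 0 ≤ a) : μ (Ioi a) ≤ μ (Iic a) :=
  calc μ (Ioi a) ≤ μ (Ioi 0) := measure_mono (Ioi_subset_Ioi ha)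
    _ = μ (Iio 0) := by rw [← measure_Iio_neg, neg_zero]
    _ ≤ μ (Iic a) := measure_mono fun x hx => (le_of_lt hx).trans ha

end Symmetric

section Tails

variable (μ : Measure ℝ) [μ.IsNegInvariant]

theorem measure_pi_coordCount_Iic_eq_one_le {ι : Type*} [Fintype ι] [SigmaFinite μ]
    (hι : 2 ≤ Fintype.card ι) {a : ℝ} (ha : 0 ≤ a) :
    Measure.pi (fun _ : ι => μ) {ω | coordCount (Iic a) ω = 1}
      ≤ Measure.pi (fun _ : ι => μ) {ω | coordCount (Iio (-a)) ω = 1} := by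
  obtain ⟨k, hk⟩ : ∃ k, Fintype.card ι = k + 2 := ⟨_, (Nat.sub_add_cancel hι).symm⟩
  rw [measure_pi_coordCount_eq_one μ measurableSet_Iic,
    measure_pi_coordCount_eq_one μ measurableSet_Iio, compl_Iic, compl_Iio, measure_Iio_neg,
    measure_Ici_neg, hk]
  exact mul_le_mul_of_nonneg_left
    (mul_pow_succ_le_mul_pow_succ zero_le (measure_Ioi_le_measure_Iic ha) k) zero_le

theorem measure_lt_abs_orderStat_one_le [SigmaFinite μ] {n : ℕ} (hn : 2 ≤ n) {a : ℝ}
    (ha : 0 ≤ a) :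
    Measure.pi (fun _ => μ) {ω | a < |orderStat n 1 ω|}
      ≤ Measure.pi (fun _ => μ) {ω | a < |orderStat n 0 ω|} := by
  set A : (Fin n → ℝ) → ℕ := coordCount (Iic a)
  set B : (Fin n → ℝ) → ℕ := coordCount (Iio (-a))
  have hBA (ω : Fin n → ℝ) : B ω ≤ A ω :=
    coordCount_mono (Iio_subset_Iic_self.trans (Iic_subset_Iic.mpr (by linarith))) ω
  have hevent {k : ℕ} (hk : k < n) (ω : Fin n → ℝ) :
      a < |orderStat n k ω| ↔ A ω ≤ k ∨ k < B ω := by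
    rw [lt_abs, lt_orderStat_iff hk, lt_neg, orderStat_lt_iff hk]
  have hsplit1 :
      {ω | a < |orderStat n 1 ω|} = {ω | A ω = 0 ∨ 2 ≤ B ω} ∪ {ω | A ω = 1} := by
    ext ω
    simp only [mem_union, mem_ofPred_eq, hevent (by omega : 1 < n)]
    have := hBA ω
    omega
  have hsplit0 :
      {ω | a < |orderStat n 0 ω|} = {ω | A ω = 0 ∨ 2 ≤ B ω} ∪ {ω | B ω = 1} := by
    ext ω
    simp only [mem_union, mem_ofPred_eq, hevent (by omega : 0 < n)]
    have := hBA ω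
    omega
  have hdisj (C : (Fin n → ℝ) → ℕ) (hC : ∀ ω, C ω = 1 → 1 ≤ A ω ∧ B ω ≤ 1) :
      Disjoint {ω | A ω = 0 ∨ 2 ≤ B ω} {ω | C ω = 1} := by
    refine Set.disjoint_left.mpr fun ω hω hCω => ?_
    have := hC ω hCω
    simp only [mem_ofPred_eq] at hω
    omega
  rw [hsplit1, hsplit0,
    measure_union (hdisj A fun ω h => ⟨h.ge, (hBA ω).trans h.le⟩)
      (measurable_coordCount measurableSet_Iic (measurableSet_singleton 1)),
    measure_union (hdisj B fun ω h => ⟨h ▸ hBA ω, h.le⟩)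
      (measurable_coordCount measurableSet_Iio (measurableSet_singleton 1))]
  exact add_le_add le_rfl
    (measure_pi_coordCount_Iic_eq_one_le μ (ι := Fin n) (by simpa using hn) ha)

end Tails

section SecondMoment

variable (μ : Measure ℝ) [IsProbabilityMeasure μ] {n : ℕ}

theorem integrable_orderStat_sq (hμ : Integrable (fun x => x ^ 2) μ) {k : ℕ} (hk : k < n) :
    Integrable (fun ω => orderStat n k ω ^ 2) (Measure.pi fun _ => μ) := by
  refine Integrable.mono' (g := fun ω => ∑ i, ω i ^ 2)
    (integrable_finsetSum _ fun i _ => ?_)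
    ((measurable_orderStat hk).pow_const 2).aestronglyMeasurable (ae_of_all _ fun ω => ?_)
  · exact (measurePreserving_eval (fun _ => μ) i).integrable_comp_of_integrable hμ
  · obtain ⟨i, hi⟩ := exists_orderStat_eq hk ω
    rw [Real.norm_of_nonneg (sq_nonneg _), hi]
    exact Finset.single_le_sum (f := fun j => ω j ^ 2) (fun j _ => sq_nonneg _)
      (Finset.mem_univ i)

theorem integral_orderStat_one_sq_le [μ.IsNegInvariant] (hμ : Integrable (fun x => x ^ 2) μ)
    (hn : 2 ≤ n) :
    ∫ ω, orderStat n 1 ω ^ 2 ∂(Measure.pi fun _ => μ)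
      ≤ ∫ ω, orderStat n 0 ω ^ 2 ∂(Measure.pi fun _ => μ) := by
  have hnonneg (k : ℕ) : 0 ≤ᵐ[Measure.pi fun _ => μ] fun ω => orderStat n k ω ^ 2 :=
    ae_of_all _ fun ω => sq_nonneg _
  have hmeas {k : ℕ} (hk : k < n) : Measurable fun ω => orderStat n k ω ^ 2 :=
    (measurable_orderStat hk).pow_const 2
  rw [integral_eq_lintegral_of_nonneg_ae (hnonneg 1) (hmeas (by omega)).aestronglyMeasurable,
    integral_eq_lintegral_of_nonneg_ae (hnonneg 0) (hmeas (by omega)).aestronglyMeasurable]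
  refine ENNReal.toReal_mono (integrable_orderStat_sq μ hμ (by omega)).lintegral_lt_top.ne ?_
  rw [lintegral_eq_lintegral_meas_lt _ (hnonneg 1) (hmeas (by omega)).aemeasurable,
    lintegral_eq_lintegral_meas_lt _ (hnonneg 0) (hmeas (by omega)).aemeasurable]
  refine setLIntegral_mono' measurableSet_Ioi fun t ht => ?_
  have hsqrt (k : ℕ) :
      {ω | t < orderStat n k ω ^ 2} = {ω | √t < |orderStat n k ω|} := by
    ext ω
    rw [mem_ofPred_eq, mem_ofPred_eq, ← Real.sqrt_lt_sqrt_iff (le_of_lt ht),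
      Real.sqrt_sq_eq_abs]
  rw [hsqrt, hsqrt]
  exact measure_lt_abs_orderStat_one_le μ hn (Real.sqrt_nonneg t)

end SecondMoment

instance (v : NNReal) : (gaussianReal 0 v).IsNegInvariant :=
  ⟨by rw [Measure.neg, gaussianReal_map_neg, neg_zero]⟩

theorem stmt_3 (lam : ℕ) (hlam : 2 ≤ lam) :
    (∫ ω, (orderStat lam 1 ω) ^ 2 ∂(stdPi lam))
      ≤ ∫ ω, (orderStat lam 0 ω) ^ 2 ∂(stdPi lam) :=
  integral_orderStat_one_sq_le _ ((memLp_id_gaussianReal 2).integrable_sq) hlam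
end

section
/- Define the Markov chain Z_{t+1} = Z_t/η*_t + ξ*_{t+1,1}, where (η*_t, ξ*_{t+1,1}) are i.i.d. pairs with ξ*_1 the first coordinate of the selected step (distributed as N_{1:λ}) and η*_t = exp((1/(2d_σ))(‖ξ*_t‖²/n − 1)). If there exists α > 0 with E[(η*)^{-α}] < 1, then the drift function V(x) = 1 + |x|^α satisfies: there exist ε > 0, M > 0 and b < ∞ such that ΔV(x) := E[V(Z_{t+1}) | Z_t = x] − V(x) ≤ −εV(x) + b·1_{[−M,M]}(x) for all x ∈ ℝ. -/
open MeasureTheory ProbabilityTheory Filter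

/-- Law of the selected step on a linear function: first coordinate distributed as
the minimum of `lam` i.i.d. standard normals, the other coordinates standard normal,
all independent. -/
noncomputable def selLaw (n lam : ℕ) : Measure (Fin n → ℝ) :=
  Measure.pi fun i =>
    if (i : ℕ) = 0 then Measure.map (orderStat lam 0) (stdPi lam)
    else gaussianReal 0 1

/-!
Let `ρ = E[η^(-α)] < 1` and pick `δ > 0` with `(1 + δ)^α ρ < 1`. For every `α ≥ 0`,
`(a + b)^α ≤ (1 + δ)^α a^α + (1 + δ⁻¹)^α b^α` (bound `a + b` by whichever of `(1 + δ) a`,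
`(1 + δ⁻¹) b` is larger), so taking expectations gives the one-step contraction
`PV ≤ r V + K` with `r = (1 + δ)^α ρ < 1`. For a coercive `V ≥ 0` such a contraction is a
geometric drift condition with `ε = (1 - r)/2`: off the bounded sublevel set `{V ≤ K/ε}`
the constant `K` is absorbed by `-ε V`.
-/

open Real Set Topology

theorem add_rpow_le_one_add_rpow_mul_add {a b δ α : ℝ} (ha : 0 ≤ a) (hb : 0 ≤ b) (hδ : 0 < δ)
    (hα : 0 ≤ α) : (a + b) ^ α ≤ (1 + δ) ^ α * a ^ α + (1 + δ⁻¹) ^ α * b ^ α := by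
  rcases le_or_gt b (δ * a) with hba | hab
  · calc (a + b) ^ α ≤ ((1 + δ) * a) ^ α := rpow_le_rpow (by positivity) (by linarith) hα
      _ = (1 + δ) ^ α * a ^ α := mul_rpow (by positivity) ha
      _ ≤ _ := le_add_of_nonneg_right (by positivity)
  · have : a ≤ δ⁻¹ * b := (le_inv_mul_iff₀ hδ).2 hab.le
    calc (a + b) ^ α ≤ ((1 + δ⁻¹) * b) ^ α := rpow_le_rpow (by positivity) (by linarith) hα
      _ = (1 + δ⁻¹) ^ α * b ^ α := mul_rpow (by positivity) hb
      _ ≤ _ := le_add_of_nonneg_left (by positivity)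

theorem abs_div_add_rpow_le {x η ξ δ α : ℝ} (hη : 0 < η) (hδ : 0 < δ) (hα : 0 ≤ α) :
    |x / η + ξ| ^ α ≤ (1 + δ) ^ α * |x| ^ α * η ^ (-α) + (1 + δ⁻¹) ^ α * |ξ| ^ α := by
  have htri : |x / η + ξ| ≤ |x| / η + |ξ| := by
    simpa [abs_div, abs_of_pos hη] using abs_add_le (x / η) ξ
  calc |x / η + ξ| ^ α ≤ (|x| / η + |ξ|) ^ α := rpow_le_rpow (abs_nonneg _) htri hα
    _ ≤ (1 + δ) ^ α * (|x| / η) ^ α + (1 + δ⁻¹) ^ α * |ξ| ^ α :=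
      add_rpow_le_one_add_rpow_mul_add (by positivity) (abs_nonneg ξ) hδ hα
    _ = _ := by rw [div_rpow (abs_nonneg x) hη.le, rpow_neg hη.le, div_eq_mul_inv, mul_assoc]

theorem exists_one_add_rpow_mul_lt_one {ρ : ℝ} (hρ : ρ < 1) (α : ℝ) :
    ∃ δ > 0, (1 + δ) ^ α * ρ < 1 := by
  have hcont : ContinuousAt (fun δ : ℝ => (1 + δ) ^ α * ρ) 0 :=
    ((continuousAt_const.add continuousAt_id).rpow_const (by simp)).mul continuousAt_const
  have hnear : ∀ᶠ δ in 𝓝[>] (0 : ℝ), (1 + δ) ^ α * ρ < 1 :=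
    nhdsWithin_le_nhds (hcont.eventually_lt continuousAt_const (by simpa using hρ))
  obtain ⟨δ, hδ1, hδ0⟩ := (hnear.and self_mem_nhdsWithin).exists
  exact ⟨δ, hδ0, hδ1⟩

theorem exists_drift_of_le_mul_add {V PV : ℝ → ℝ} (hV0 : ∀ x, 0 ≤ V x)
    (hV : Tendsto V (cocompact ℝ) atTop) {r K : ℝ} (hr : r < 1)
    (hPV : ∀ x, PV x ≤ r * V x + K) :
    ∃ ε > (0 : ℝ), ∃ M > (0 : ℝ), ∃ b : ℝ, ∀ x : ℝ,
      PV x - V x ≤ -ε * V x + (Icc (-M) M).indicator (fun _ => b) x := by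
  have hε : 0 < (1 - r) / 2 := by linarith
  obtain ⟨R, hR⟩ := Metric.closedBall_compl_subset_of_mem_cocompact
    (hV.eventually_gt_atTop (K / ((1 - r) / 2))) 0
  refine ⟨(1 - r) / 2, hε, max R 1, by positivity, K, fun x => ?_⟩
  by_cases hx : x ∈ Icc (-max R 1) (max R 1)
  · rw [indicator_of_mem hx]
    nlinarith [hPV x, hV0 x]
  · rw [indicator_of_notMem hx]
    have hlarge : K / ((1 - r) / 2) < V x := hR fun hxR => hx <| by
      rw [Metric.mem_closedBall, dist_zero_right, Real.norm_eq_abs] at hxR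
      exact abs_le.1 (hxR.trans (le_max_left R 1))
    rw [div_lt_iff₀ hε] at hlarge
    nlinarith [hPV x]

theorem exists_integral_one_add_abs_div_add_rpow_le {Ω : Type*} [MeasurableSpace Ω]
    {μ : Measure Ω} [IsProbabilityMeasure μ] {η ξ : Ω → ℝ} {α : ℝ} (hα : 0 ≤ α)
    (hη : ∀ ω, 0 < η ω) (hη_int : Integrable (fun ω => η ω ^ (-α)) μ)
    (hη_lt : ∫ ω, η ω ^ (-α) ∂μ < 1) (hξ_int : Integrable (fun ω => |ξ ω| ^ α) μ) :
    ∃ r < 1, ∃ K : ℝ, ∀ x : ℝ,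
      ∫ ω, (1 + |x / η ω + ξ ω| ^ α) ∂μ ≤ r * (1 + |x| ^ α) + K := by
  obtain ⟨δ, hδ, hδρ⟩ := exists_one_add_rpow_mul_lt_one hη_lt α
  set A := (1 + δ) ^ α
  set B := (1 + δ⁻¹) ^ α
  refine ⟨A * ∫ ω, η ω ^ (-α) ∂μ, hδρ, 1 - A * ∫ ω, η ω ^ (-α) ∂μ + B * ∫ ω, |ξ ω| ^ α ∂μ,
    fun x => ?_⟩
  have hη_part : Integrable (fun ω => 1 + A * |x| ^ α * η ω ^ (-α)) μ :=
    (integrable_const 1).add (hη_int.const_mul _)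
  calc ∫ ω, (1 + |x / η ω + ξ ω| ^ α) ∂μ
      ≤ ∫ ω, (1 + A * |x| ^ α * η ω ^ (-α) + B * |ξ ω| ^ α) ∂μ :=
        integral_mono_of_nonneg (.of_forall fun ω => by positivity)
          (hη_part.add (hξ_int.const_mul B))
          (.of_forall fun ω => by
            linarith [abs_div_add_rpow_le (x := x) (ξ := ξ ω) (hη ω) hδ hα])
    _ = 1 + A * |x| ^ α * ∫ ω, η ω ^ (-α) ∂μ + B * ∫ ω, |ξ ω| ^ α ∂μ := by
        rw [integral_add hη_part (hξ_int.const_mul B),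
          integral_add (integrable_const 1) (hη_int.const_mul _), integral_const_mul,
          integral_const_mul, integral_const, probReal_univ, one_smul]
    _ = _ := by ring

theorem integrable_exp_rpow_neg {Ω : Type*} [MeasurableSpace Ω] {μ : Measure Ω}
    [IsFiniteMeasure μ] {f : Ω → ℝ} (hf : Measurable f) {L : ℝ} (hfL : ∀ ω, L ≤ f ω)
    {α : ℝ} (hα : 0 ≤ α) : Integrable (fun ω => exp (f ω) ^ (-α)) μ := by
  refine .of_bound (hf.exp.pow_const _).aestronglyMeasurable (exp (-α * L)) (.of_forall fun ω => ?_)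
  rw [← exp_mul, norm_of_nonneg (exp_pos _).le, exp_le_exp, mul_comm]
  nlinarith [hfL ω]

theorem orderStat_zero_eq_inf' {lam : ℕ} (hlam : 1 ≤ lam) (ω : Fin lam → ℝ) :
    orderStat lam 0 ω = Finset.univ.inf' (Finset.univ_nonempty_iff.2 ⟨⟨0, hlam⟩⟩) ω := by
  obtain ⟨a, t, hsort⟩ : ∃ a t, (List.ofFn ω).insertionSort (· ≤ ·) = a :: t := by
    apply List.exists_cons_of_ne_nil
    rw [← List.length_pos_iff, List.length_insertionSort, List.length_ofFn]
    exact hlam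
  have hmem : ∀ b, b ∈ a :: t ↔ ∃ i, ω i = b := by
    intro b; rw [← hsort, List.mem_insertionSort, List.mem_ofFn']; rfl
  have hsorted : (a :: t).Pairwise (· ≤ ·) := hsort ▸ List.pairwise_insertionSort _ _
  rw [orderStat, hsort, List.getD_cons_zero]
  obtain ⟨i, rfl⟩ := (hmem a).1 List.mem_cons_self
  refine le_antisymm (Finset.le_inf' _ _ fun j _ => ?_) (Finset.inf'_le _ (Finset.mem_univ i))
  rcases List.mem_cons.1 ((hmem (ω j)).2 ⟨j, rfl⟩) with h | h
  · exact h.ge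
  · exact List.rel_of_pairwise_cons hsorted h

theorem measurable_orderStat_zero_s10 {lam : ℕ} (hlam : 1 ≤ lam) : Measurable (orderStat lam 0) := by
  have : orderStat lam 0 =
      Finset.univ.inf' (Finset.univ_nonempty_iff.2 ⟨⟨0, hlam⟩⟩) fun i (ω : Fin lam → ℝ) => ω i := by
    funext ω
    rw [orderStat_zero_eq_inf' hlam, Finset.inf'_apply]
  rw [this]
  exact Finset.inf'_induction _ _ (fun _ hf _ hg => hf.inf hg) fun i _ => measurable_pi_apply i

instance (n : ℕ) : IsProbabilityMeasure (stdPi n) := by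
  unfold stdPi
  infer_instance

theorem integrable_abs_rpow_gaussianReal (μ : ℝ) (v : NNReal) {α : ℝ} (hα : 0 ≤ α) :
    Integrable (fun t => |t| ^ α) (gaussianReal μ v) := by
  exact (memLp_id_gaussianReal (μ := μ) (v := v) ⟨α, hα⟩).integrable_norm_rpow'

theorem integrable_abs_orderStat_zero_rpow {lam : ℕ} (hlam : 1 ≤ lam) {α : ℝ} (hα : 0 ≤ α) :
    Integrable (fun ω => |orderStat lam 0 ω| ^ α) (stdPi lam) := by
  have hsum : Integrable (fun ω : Fin lam → ℝ => ∑ j, |ω j| ^ α) (stdPi lam) :=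
    integrable_finsetSum _ fun j _ =>
      (measurePreserving_eval (fun _ => gaussianReal 0 1) j).integrable_comp_of_integrable
      (integrable_abs_rpow_gaussianReal 0 1 hα)
  refine hsum.mono' ((measurable_orderStat_zero_s10 hlam).abs.pow_const α).aestronglyMeasurable
    (.of_forall fun ω => ?_)
  obtain ⟨i, -, hi⟩ := Finset.exists_mem_eq_inf' (Finset.univ_nonempty_iff.2 ⟨⟨0, hlam⟩⟩) ω
  rw [norm_of_nonneg (by positivity), orderStat_zero_eq_inf' hlam, hi]
  exact Finset.single_le_sum (f := fun j => |ω j| ^ α) (fun j _ => by positivity)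
    (Finset.mem_univ i)

theorem isProbabilityMeasure_selLaw_marginal {n lam : ℕ} (hlam : 1 ≤ lam) (i : Fin n) :
    IsProbabilityMeasure
      (if (i : ℕ) = 0 then Measure.map (orderStat lam 0) (stdPi lam) else gaussianReal 0 1) := by
  split_ifs
  · exact Measure.isProbabilityMeasure_map (measurable_orderStat_zero_s10 hlam).aemeasurable
  · infer_instance

theorem isProbabilityMeasure_selLaw (n : ℕ) {lam : ℕ} (hlam : 1 ≤ lam) :
    IsProbabilityMeasure (selLaw n lam) := by
  have := isProbabilityMeasure_selLaw_marginal (n := n) hlam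
  unfold selLaw
  infer_instance

theorem integrable_abs_selLaw_zero_rpow {n lam : ℕ} (hn : 1 ≤ n) (hlam : 1 ≤ lam) {α : ℝ}
    (hα : 0 ≤ α) : Integrable (fun ξ : Fin n → ℝ => |ξ ⟨0, hn⟩| ^ α) (selLaw n lam) := by
  have := isProbabilityMeasure_selLaw_marginal (n := n) hlam
  unfold selLaw
  show Integrable ((fun t : ℝ => |t| ^ α) ∘ fun ξ : Fin n → ℝ => ξ ⟨0, hn⟩) _
  refine (measurePreserving_eval _ _).integrable_comp_of_integrable ?_
  rw [if_pos rfl, integrable_map_measure (by fun_prop) (measurable_orderStat_zero_s10 hlam).aemeasurable]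
  exact integrable_abs_orderStat_zero_rpow hlam hα

theorem stmt_10 (n lam : ℕ) (hn : 1 ≤ n) (hlam : 1 ≤ lam) (d : ℝ) (hd : 0 < d)
    (α : ℝ) (hα : 0 < α)
    (hcontract : (∫ x, (Real.exp ((1 / (2 * d)) * ((∑ i, (x i) ^ 2) / n - 1))) ^ (-α)
        ∂(selLaw n lam)) < 1)
    (V : ℝ → ℝ) (hV : ∀ x, V x = 1 + |x| ^ α) :
    ∃ ε > (0 : ℝ), ∃ M > (0 : ℝ), ∃ b : ℝ,
      ∀ x : ℝ,
        (∫ ξ, V (x / Real.exp ((1 / (2 * d)) * ((∑ i, (ξ i) ^ 2) / n - 1)) + ξ ⟨0, hn⟩)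
            ∂(selLaw n lam)) - V x
          ≤ -ε * V x + Set.indicator (Set.Icc (-M) M) (fun _ => b) x := by
  obtain rfl : V = fun x => 1 + |x| ^ α := funext hV
  have := isProbabilityMeasure_selLaw n hlam
  have hexponent_ge (ξ : Fin n → ℝ) : -(1 / (2 * d)) ≤ 1 / (2 * d) * ((∑ i, ξ i ^ 2) / n - 1) := by
    have : 0 ≤ 1 / (2 * d) * ((∑ i, ξ i ^ 2) / n) := by positivity
    linarith [mul_sub (1 / (2 * d)) ((∑ i, ξ i ^ 2) / n) 1]
  obtain ⟨r, hr, K, hK⟩ := exists_integral_one_add_abs_div_add_rpow_le hα.le (fun _ => exp_pos _)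
    (integrable_exp_rpow_neg (by fun_prop) hexponent_ge hα.le) hcontract
    (integrable_abs_selLaw_zero_rpow hn hlam hα.le)
  have hV_coercive : Tendsto (fun x : ℝ => 1 + |x| ^ α) (cocompact ℝ) atTop :=
    tendsto_atTop_add_const_left _ 1 ((tendsto_rpow_atTop hα).comp tendsto_norm_cocompact_atTop)
  exact exists_drift_of_le_mul_add (fun x => by positivity) hV_coercive hr hK
end

section
/- For λ = 2 and 0 < c < 1, the limit divergence rate of the (1,2)-CSA-ES with cumulation equals ((1−c)/(d_σ n))·E[N_{1:2}]², which is strictly positive. -/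
open MeasureTheory ProbabilityTheory Filter

/-! For i.i.d. `X, Y`, `min X Y + max X Y = X + Y` and `max X Y - min X Y = |X - Y|`, so
`E[min X Y] = E[X] - E|X - Y| / 2 < E[X]` unless the common law is a point mass; for standard
normals this gives `E[N_{1:2}] < 0`. If the law is symmetric, negating both samples exchanges
`min` and `max`, so `E[(min X Y)²] = (E[X²] + E[Y²]) / 2 = E[X²]`. Hence `E[N_{1:2}²] = 1` and
the `c`-term of the rate vanishes. -/

open Set
open scoped ENNReal NNReal

lemma orderStat_two_zero (ω : Fin 2 → ℝ) : orderStat 2 0 ω = min (ω 0) (ω 1) := by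
  by_cases h : ω 0 ≤ ω 1
  · simp [orderStat, List.ofFn_succ, List.insertionSort, h]
  · simp [orderStat, List.ofFn_succ, List.insertionSort, h, (not_le.1 h).le]

lemma min_sq_add_max_sq (a b : ℝ) : min a b ^ 2 + max a b ^ 2 = a ^ 2 + b ^ 2 := by
  rcases le_total a b with h | h <;> simp [h, add_comm]

section TwoSample

variable {μ : Measure ℝ} [IsProbabilityMeasure μ]

lemma integral_add_eval_two {f : ℝ → ℝ} (hf : Integrable f μ) :
    ∫ ω, (f (ω 0) + f (ω 1)) ∂(Measure.pi fun _ : Fin 2 => μ) = 2 * ∫ x, f x ∂μ := by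
  have h0 : Integrable (fun ω : Fin 2 → ℝ => f (ω 0)) (Measure.pi fun _ => μ) :=
    integrable_comp_eval hf
  have h1 : Integrable (fun ω : Fin 2 → ℝ => f (ω 1)) (Measure.pi fun _ => μ) :=
    integrable_comp_eval hf
  rw [integral_add h0 h1, integral_comp_eval hf.1, integral_comp_eval hf.1]
  ring

lemma memLp_min_two {q : ℝ≥0∞} (h : MemLp id q μ) :
    MemLp (fun ω : Fin 2 → ℝ => min (ω 0) (ω 1)) q (Measure.pi fun _ => μ) :=
  (h.comp_measurePreserving (measurePreserving_eval _ 0)).inf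
    (h.comp_measurePreserving (measurePreserving_eval _ 1))

lemma memLp_max_two {q : ℝ≥0∞} (h : MemLp id q μ) :
    MemLp (fun ω : Fin 2 → ℝ => max (ω 0) (ω 1)) q (Measure.pi fun _ => μ) :=
  (h.comp_measurePreserving (measurePreserving_eval _ 0)).sup
    (h.comp_measurePreserving (measurePreserving_eval _ 1))

lemma integral_abs_sub_two_pos (h : Integrable id μ) {a : ℝ} (ha : μ (Iic a) ≠ 0)
    (ha' : μ (Ioi a) ≠ 0) :
    0 < ∫ ω, |ω 0 - ω 1| ∂(Measure.pi fun _ : Fin 2 => μ) := by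
  have hint : Integrable (fun ω : Fin 2 → ℝ => |ω 0 - ω 1|) (Measure.pi fun _ => μ) :=
    ((integrable_eval (i := (0 : Fin 2)) h).sub (integrable_eval (i := (1 : Fin 2)) h)).abs
  rw [integral_pos_iff_support_of_nonneg (fun _ => abs_nonneg _) hint]
  have hsub : Set.pi univ ![Iic a, Ioi a] ⊆
      Function.support fun ω : Fin 2 → ℝ => |ω 0 - ω 1| := by
    intro ω hω
    have h0 : ω 0 ≤ a := by simpa using hω 0 (mem_univ _)
    have h1 : a < ω 1 := by simpa using hω 1 (mem_univ _)
    simp only [Function.mem_support, abs_ne_zero, sub_ne_zero]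
    exact (h0.trans_lt h1).ne
  refine lt_of_lt_of_le ?_ (measure_mono hsub)
  rw [Measure.pi_pi, Fin.prod_univ_two]
  simpa [pos_iff_ne_zero] using ⟨ha, ha'⟩

lemma integral_min_two_lt (h : Integrable id μ) {a : ℝ} (ha : μ (Iic a) ≠ 0)
    (ha' : μ (Ioi a) ≠ 0) :
    ∫ ω, min (ω 0) (ω 1) ∂(Measure.pi fun _ : Fin 2 => μ) < ∫ x, x ∂μ := by
  have h1 : MemLp id 1 μ := memLp_one_iff_integrable.2 h
  have hmin := (memLp_min_two h1).integrable le_rfl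
  have hmax := (memLp_max_two h1).integrable le_rfl
  have hsum : ∫ ω, min (ω 0) (ω 1) ∂(Measure.pi fun _ : Fin 2 => μ) +
      ∫ ω, max (ω 0) (ω 1) ∂(Measure.pi fun _ : Fin 2 => μ) = 2 * ∫ x, x ∂μ := by
    rw [← integral_add hmin hmax]
    simp_rw [min_add_max]
    exact integral_add_eval_two h
  have hdiff : ∫ ω, max (ω 0) (ω 1) ∂(Measure.pi fun _ : Fin 2 => μ) -
      ∫ ω, min (ω 0) (ω 1) ∂(Measure.pi fun _ : Fin 2 => μ) =
      ∫ ω, |ω 0 - ω 1| ∂(Measure.pi fun _ : Fin 2 => μ) := by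
    rw [← integral_sub hmax hmin]
    simp_rw [max_sub_min_eq_abs, abs_sub_comm]
  linarith [integral_abs_sub_two_pos h ha ha']

lemma integral_min_two_sq [μ.IsNegInvariant] (h : MemLp id 2 μ) :
    ∫ ω, min (ω 0) (ω 1) ^ 2 ∂(Measure.pi fun _ : Fin 2 => μ) = ∫ x, x ^ 2 ∂μ := by
  have hmin := (memLp_min_two h).integrable_sq
  have hmax := (memLp_max_two h).integrable_sq
  have hsym : ∫ ω, max (ω 0) (ω 1) ^ 2 ∂(Measure.pi fun _ : Fin 2 => μ) =
      ∫ ω, min (ω 0) (ω 1) ^ 2 ∂(Measure.pi fun _ : Fin 2 => μ) := by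
    rw [← integral_neg_eq_self]
    simp only [Pi.neg_apply, max_neg_neg, neg_sq]
  have hsum : ∫ ω, min (ω 0) (ω 1) ^ 2 ∂(Measure.pi fun _ : Fin 2 => μ) +
      ∫ ω, max (ω 0) (ω 1) ^ 2 ∂(Measure.pi fun _ : Fin 2 => μ) =
        2 * ∫ x, x ^ 2 ∂μ := by
    rw [← integral_add hmin hmax]
    simp_rw [min_sq_add_max_sq]
    exact integral_add_eval_two h.integrable_sq
  linarith

end TwoSample

instance isNegInvariant_gaussianReal_zero (v : ℝ≥0) : (gaussianReal 0 v).IsNegInvariant :=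
  ⟨gaussianReal_map_neg.trans (by rw [neg_zero])⟩

lemma integral_sq_gaussianReal (v : ℝ≥0) : ∫ x, x ^ 2 ∂gaussianReal 0 v = v := by
  simpa [variance_eq_integral measurable_id.aemeasurable] using
    variance_id_gaussianReal (μ := 0) (v := v)

lemma gaussianReal_ne_zero_of_volume_ne_zero (m : ℝ) {v : ℝ≥0} (hv : v ≠ 0) {s : Set ℝ}
    (hs : volume s ≠ 0) : gaussianReal m v s ≠ 0 :=
  fun h => hs (gaussianReal_absolutelyContinuous' m hv h)

theorem stmt_15_general (n : ℕ) (hn : 1 ≤ n) (c d : ℝ) (hc1 : c < 1)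
    (hd : 0 < d) :
    (1 / (2 * d * n)) *
        (2 * (1 - c) * (∫ u, orderStat 2 0 u ∂(stdPi 2)) ^ 2 +
          c * ((∫ u, (orderStat 2 0 u) ^ 2 ∂(stdPi 2)) - 1))
      = ((1 - c) / (d * n)) * (∫ u, orderStat 2 0 u ∂(stdPi 2)) ^ 2 ∧
    0 < ((1 - c) / (d * n)) * (∫ u, orderStat 2 0 u ∂(stdPi 2)) ^ 2 := by
  have hg : MemLp id 2 (gaussianReal 0 1) := memLp_id_gaussianReal 2
  have hmin : ∫ u, orderStat 2 0 u ∂(stdPi 2) < 0 := by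
    simpa [orderStat_two_zero, stdPi] using integral_min_two_lt (hg.integrable one_le_two)
      (gaussianReal_ne_zero_of_volume_ne_zero 0 one_ne_zero (s := Iic 0) (by simp))
      (gaussianReal_ne_zero_of_volume_ne_zero 0 one_ne_zero (s := Ioi 0) (by simp))
  have hsq : ∫ u, orderStat 2 0 u ^ 2 ∂(stdPi 2) = 1 := by
    simpa [orderStat_two_zero, stdPi, integral_sq_gaussianReal] using integral_min_two_sq hg
  have hn' : (0 : ℝ) < n := by exact_mod_cast hn
  refine ⟨by rw [hsq]; field_simp; ring, by have := sq_pos_of_neg hmin; positivity⟩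

theorem stmt_15 (n : ℕ) (hn : 1 ≤ n) (c d : ℝ) (hc0 : 0 < c) (hc1 : c < 1)
    (hd : 0 < d) :
    (1 / (2 * d * n)) *
        (2 * (1 - c) * (∫ u, orderStat 2 0 u ∂(stdPi 2)) ^ 2 +
          c * ((∫ u, (orderStat 2 0 u) ^ 2 ∂(stdPi 2)) - 1))
      = ((1 - c) / (d * n)) * (∫ u, orderStat 2 0 u ∂(stdPi 2)) ^ 2 ∧
    0 < ((1 - c) / (d * n)) * (∫ u, orderStat 2 0 u ∂(stdPi 2)) ^ 2 :=
  stmt_15_general n hn c d hc1 hd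
end
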